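/- Let K be a compact convex subset of ℝ² with nonempty interior and let w be the width of K. Then there exists a point c ∈ ℝ² such that the closed disk of radius w/(2√3) centered at c is contained in K. -/

import Mathlib

open MeasureTheory Pointwise
open scoped RealInnerProductSpace

noncomputable section

abbrev Plane := EuclideanSpace ℝ (Fin 2)

/-- The width of a set `K ⊆ ℝ²`: the infimum over unit vectors `u` of the
extent of `K` in the direction `u`. -/
noncomputable def width (K : Set Plane) : ℝ :=
  sInf {w : ℝ | ∃ u : Plane, ‖u‖ = 1 ∧
    w = sSup ((fun p => (inner ℝ p u : ℝ)) '' K) - sInf ((fun p => (inner ℝ p u : ℝ)) '' K)}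

/-!
Let `closedBall c R` be a largest ball in `K`. The outer unit normals of the supporting lines of `K`
touching it have `0` in their convex hull: otherwise some `v` makes an obtuse angle with all of
them, and moving the center slightly along `v` makes room for a larger ball. By Carathéodory, `0` is
a convex combination of at most three of these normals, one of weight `≥ 1/3`; in its direction `K`
lies in a strip of width `3R`. Hence `width K ≤ 3R`, and `3 ≤ 2√3`.
-/

open Metric Set Module

section ConvexHull

variable {E : Type*} [NormedAddCommGroup E] [NormedSpace ℝ E] [FiniteDimensional ℝ E]

-- By Carathéodory, `convexHull ℝ s` is a finite union of continuous images of
-- `stdSimplex ℝ (Fin k) × sᵏ` with `k ≤ finrank ℝ E + 1`.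
theorem IsCompact.convexHull {s : Set E} (hs : IsCompact s) : IsCompact (convexHull ℝ s) := by
  have hcover : _root_.convexHull ℝ s = ⋃ k ∈ Finset.range (finrank ℝ E + 2),
      (fun p : (Fin k → ℝ) × (Fin k → E) => ∑ i, p.1 i • p.2 i) ''
        (stdSimplex ℝ (Fin k) ×ˢ univ.pi fun _ => s) := by
    refine Subset.antisymm (fun x hx => ?_) ?_
    · obtain ⟨ι, _, z, w, hzs, hz, hw0, hw1, rfl⟩ := eq_pos_convex_span_of_mem_convexHull hx
      have hcard : Fintype.card ι < finrank ℝ E + 2 :=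
        Nat.lt_succ_of_le (hz.card_le_finrank_succ.trans (by simp [Submodule.finrank_le]))
      let e := Fintype.equivFin ι
      refine mem_biUnion (Finset.mem_range.2 hcard) ⟨(w ∘ e.symm, z ∘ e.symm),
        ⟨⟨fun i => (hw0 _).le, ?_⟩, fun i _ => hzs (mem_range_self _)⟩, ?_⟩
      · simpa [Function.comp_def] using (e.symm.sum_comp w).trans hw1
      · exact e.symm.sum_comp fun i => w i • z i
    · simp only [iUnion_subset_iff]
      rintro k - _ ⟨⟨w, z⟩, ⟨⟨hw0, hw1⟩, hz⟩, rfl⟩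
      exact mem_convexHull_of_exists_fintype w z hw0 hw1 (fun i => hz i trivial) rfl
  rw [hcover]
  exact (Finset.range _).isCompact_biUnion fun k _ =>
    ((isCompact_stdSimplex ℝ _).prod (isCompact_univ_pi fun _ => hs)).image (by fun_prop)

end ConvexHull

section SupportFunction

variable {E : Type*} [NormedAddCommGroup E] [InnerProductSpace ℝ E] {K : Set E}

def supportFun (K : Set E) (u : E) : ℝ := sSup ((fun p => ⟪p, u⟫) '' K)

theorem IsCompact.inner_le_supportFun (hK : IsCompact K) {p : E} (hp : p ∈ K) (u : E) :
    ⟪p, u⟫ ≤ supportFun K u :=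
  le_csSup (hK.bddAbove_image (by fun_prop)) (mem_image_of_mem _ hp)

theorem supportFun_le (hne : K.Nonempty) {u : E} {a : ℝ} (h : ∀ p ∈ K, ⟪p, u⟫ ≤ a) :
    supportFun K u ≤ a :=
  csSup_le (hne.image _) (forall_mem_image.2 h)

theorem IsCompact.continuous_supportFun (hK : IsCompact K) : Continuous (supportFun K) :=
  hK.continuous_sSup (f := fun u p => ⟪p, u⟫) (by fun_prop)

theorem closedBall_subset_iff_forall_inner_add_le_supportFun [CompleteSpace E] (hK : IsCompact K)
    (hconv : Convex ℝ K) (hne : K.Nonempty) {c : E} {r : ℝ} (hr : 0 ≤ r) :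
    closedBall c r ⊆ K ↔ ∀ u, ‖u‖ = 1 → ⟪c, u⟫ + r ≤ supportFun K u := by
  refine ⟨fun hball u hu => ?_, fun hsupp x hx => ?_⟩
  · have hmem : c + r • u ∈ K := hball (by simp [norm_smul, hu, abs_of_nonneg hr])
    simpa [inner_add_left, real_inner_smul_left, real_inner_self_eq_norm_sq, hu] using
      hK.inner_le_supportFun hmem u
  by_contra hxK
  obtain ⟨f, t, hfK, htx⟩ := geometric_hahn_banach_closed_point hconv hK.isClosed hxK
  set v := (InnerProductSpace.toDual ℝ E).symm f
  have hv : ∀ y, f y = ⟪v, y⟫ := fun y => (InnerProductSpace.toDual_symm_apply (𝕜 := ℝ)).symm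
  have hv0 : 0 < ‖v‖ := by
    obtain ⟨p, hp⟩ := hne
    refine norm_pos_iff.2 fun h => ?_
    have := (hfK p hp).trans htx
    simp [hv, h] at this
  set u := ‖v‖⁻¹ • v
  have hu : ‖u‖ = 1 := by simp [u, norm_smul, hv0.ne']
  have hinner : ∀ y, ⟪y, u⟫ = ‖v‖⁻¹ * f y := fun y => by
    rw [hv, real_inner_smul_right, real_inner_comm]
  have hsupp_le : supportFun K u ≤ ‖v‖⁻¹ * t := supportFun_le hne fun p hp => by
    rw [hinner]; gcongr; exact (hfK p hp).le
  have hxu : ‖v‖⁻¹ * t < ⟪x, u⟫ := by rw [hinner]; gcongr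
  have hxc : ⟪x - c, u⟫ ≤ r := calc
    ⟪x - c, u⟫ ≤ ‖x - c‖ * ‖u‖ := real_inner_le_norm _ _
    _ ≤ r := by rwa [hu, mul_one, ← dist_eq_norm]
  linarith [hsupp u hu, inner_sub_left (𝕜 := ℝ) x c u]

end SupportFunction

theorem IsCompact.exists_largest_closedBall_subset {F : Type*} [NormedAddCommGroup F]
    [NormedSpace ℝ F] [Nontrivial F] {K : Set F} (hK : IsCompact K)
    (hint : (interior K).Nonempty) :
    ∃ c R, 0 < R ∧ closedBall c R ⊆ K ∧ ∀ c' r, closedBall c' r ⊆ K → r ≤ R := by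
  obtain ⟨x, hx⟩ := hint
  obtain ⟨c, hcK, hmax⟩ :=
    hK.exists_isMaxOn ⟨x, interior_subset hx⟩ (continuous_infDist_pt Kᶜ).continuousOn
  have hKc : Kᶜ.Nonempty :=
    nonempty_compl.2 (haveI := NormedSpace.noncompactSpace ℝ F; hK.ne_univ)
  refine ⟨c, infDist c Kᶜ, ?_, ?_, fun c' r hball => ?_⟩
  · refine lt_of_lt_of_le ?_ (hmax (interior_subset hx))
    rwa [← infDist_pos_iff_notMem_closure hKc, closure_compl, notMem_compl_iff]
  · exact (closedBall_infDist_compl_subset_closure hcK).trans hK.isClosed.closure_subset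
  rcases lt_or_ge r 0 with hr | hr
  · exact hr.le.trans infDist_nonneg
  refine le_trans ?_ (hmax (hball (mem_closedBall_self hr)))
  exact (le_infDist hKc).2 fun y hy =>
    le_of_not_gt fun hyr => hy (hball (mem_closedBall_comm.1 hyr.le))

section ContactDirections

variable {E : Type*} [NormedAddCommGroup E] [InnerProductSpace ℝ E] {K : Set E} {c : E} {R : ℝ}

/-- The outer unit normals of the supporting lines of `K` that touch `closedBall c R`. -/
def contactDirections (K : Set E) (c : E) (R : ℝ) : Set E :=
  {u ∈ sphere 0 1 | supportFun K u ≤ ⟪c, u⟫ + R}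

theorem IsCompact.isCompact_contactDirections [ProperSpace E] (hK : IsCompact K) :
    IsCompact (contactDirections K c R) :=
  (isCompact_sphere 0 1).inter_right (isClosed_le hK.continuous_supportFun (by fun_prop))

theorem IsCompact.inner_sub_le_of_mem_contactDirections (hK : IsCompact K) {p u : E} (hp : p ∈ K)
    (hu : u ∈ contactDirections K c R) : ⟪p - c, u⟫ ≤ R := by
  linarith [hK.inner_le_supportFun hp u, hu.2, inner_sub_left (𝕜 := ℝ) p c u]

theorem zero_mem_convexHull_contactDirections [FiniteDimensional ℝ E] (hK : IsCompact K)
    (hconv : Convex ℝ K) (hR : 0 ≤ R) (hball : closedBall c R ⊆ K)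
    (hmax : ∀ c' r, closedBall c' r ⊆ K → r ≤ R) :
    (0 : E) ∈ convexHull ℝ (contactDirections K c R) := by
  have hne : K.Nonempty := ⟨c, hball (mem_closedBall_self hR)⟩
  have hsupp := (closedBall_subset_iff_forall_inner_add_le_supportFun hK hconv hne hR).1 hball
  by_contra h0
  obtain ⟨f, s, hfS, hs⟩ := geometric_hahn_banach_closed_point (convex_convexHull ℝ _)
    hK.isCompact_contactDirections.convexHull.isClosed h0
  set v := (InnerProductSpace.toDual ℝ E).symm f
  have hv : ∀ y, f y = ⟪v, y⟫ := fun y => (InnerProductSpace.toDual_symm_apply (𝕜 := ℝ)).symm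
  rw [map_zero] at hs
  have hfar : IsCompact (sphere (0 : E) 1 ∩ {u | s ≤ ⟪v, u⟫}) :=
    (isCompact_sphere 0 1).inter_right (isClosed_le continuous_const (by fun_prop))
  obtain ⟨δ, hδ, hgap⟩ := hfar.exists_forall_le' (a := 0)
    (f := fun u => supportFun K u - ⟪c, u⟫ - R)
    (hK.continuous_supportFun.sub (by fun_prop) |>.sub continuous_const).continuousOn
    fun u ⟨hu, hsu⟩ => by
      by_contra! hle
      have := hfS u (subset_convexHull ℝ _ ⟨hu, by linarith⟩)
      exact (hv u ▸ this).not_ge hsu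
  set t := δ / (‖v‖ - s)
  have ht : 0 < t := div_pos hδ (by linarith [norm_nonneg v])
  have hbigger : closedBall (c + t • v) (R + t * -s) ⊆ K := by
    refine (closedBall_subset_iff_forall_inner_add_le_supportFun hK hconv hne
      (by nlinarith)).2 fun u hu => ?_
    have hshift : ⟪c + t • v, u⟫ + (R + t * -s) = ⟪c, u⟫ + R + t * (⟪v, u⟫ - s) := by
      rw [inner_add_left, real_inner_smul_left]; ring
    rw [hshift]
    rcases le_or_gt s ⟪v, u⟫ with hsu | hsu
    · have hvu : t * (⟪v, u⟫ - s) ≤ δ := by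
        calc t * (⟪v, u⟫ - s) ≤ t * (‖v‖ - s) := by
              gcongr; simpa [hu] using real_inner_le_norm v u
          _ = δ := div_mul_cancel₀ _ (by linarith [norm_nonneg v])
      linarith [hgap u ⟨mem_sphere_zero_iff_norm.2 hu, hsu⟩]
    · nlinarith [hsupp u hu]
  nlinarith [hmax _ _ hbigger]

end ContactDirections

-- With `0 = ∑ wⱼ zⱼ` a Carathéodory combination and `wᵢ ≥ 1 / (finrank + 1)`, take `u = zᵢ`:
-- `0 = ⟪y, ∑ wⱼ zⱼ⟫ ≤ wᵢ ⟪y, u⟫ + (1 - wᵢ) R`.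
theorem exists_mem_neg_finrank_mul_le_inner_of_zero_mem_convexHull {E : Type*}
    [NormedAddCommGroup E] [InnerProductSpace ℝ E] [FiniteDimensional ℝ E] {S : Set E}
    (h0 : (0 : E) ∈ convexHull ℝ S) {R : ℝ} (hR : 0 ≤ R) :
    ∃ u ∈ S, ∀ y : E, (∀ s ∈ S, ⟪y, s⟫ ≤ R) → -(finrank ℝ E * R) ≤ ⟪y, u⟫ := by
  classical
  obtain ⟨ι, _, z, w, hzS, hz, hw0, hw1, hsum⟩ := eq_pos_convex_span_of_mem_convexHull h0
  set n := finrank ℝ E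
  have hcard : (Fintype.card ι : ℝ) ≤ n + 1 := by
    exact_mod_cast hz.card_le_finrank_succ.trans (by simp [n, Submodule.finrank_le])
  have hι : (Finset.univ : Finset ι).Nonempty :=
    Finset.univ_nonempty_iff.2 (by by_contra! h; simp at hw1)
  obtain ⟨i, -, hwi⟩ : ∃ i ∈ Finset.univ, 1 / (n + 1 : ℝ) ≤ w i := by
    refine Finset.exists_le_of_sum_le hι ?_
    rwa [hw1, Finset.sum_const, Finset.card_univ, nsmul_eq_mul, mul_one_div,
      div_le_one (by positivity)]
  refine ⟨z i, hzS (mem_range_self i), fun y hy => ?_⟩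
  have hzero : ∑ j, w j * ⟪y, z j⟫ = 0 := by
    simp [← real_inner_smul_right, ← inner_sum, hsum]
  have hrest : ∑ j ∈ Finset.univ.erase i, w j * ⟪y, z j⟫ ≤ (1 - w i) * R := by
    calc ∑ j ∈ Finset.univ.erase i, w j * ⟪y, z j⟫ ≤ ∑ j ∈ Finset.univ.erase i, w j * R :=
          Finset.sum_le_sum fun j _ => by gcongr; exacts [(hw0 j).le, hy _ (hzS (mem_range_self j))]
      _ = (1 - w i) * R := by
          rw [← Finset.sum_mul, ← hw1, ← Finset.add_sum_erase _ _ (Finset.mem_univ i),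
            add_sub_cancel_left]
  rw [← Finset.add_sum_erase _ _ (Finset.mem_univ i)] at hzero
  have hwi' : 1 ≤ (n + 1) * w i := by rwa [div_le_iff₀' (by positivity)] at hwi
  nlinarith [hw0 i]

theorem width_le_of_forall_mem {K : Set Plane} (hK : IsCompact K) (hne : K.Nonempty) {u : Plane}
    (hu : ‖u‖ = 1) {a b : ℝ} (ha : ∀ p ∈ K, a ≤ ⟪p, u⟫) (hb : ∀ p ∈ K, ⟪p, u⟫ ≤ b) :
    width K ≤ b - a := by
  refine (csInf_le ⟨0, ?_⟩ (by exact ⟨u, hu, rfl⟩)).trans (sub_le_sub ?_ ?_)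
  · rintro _ ⟨u, -, rfl⟩
    exact sub_nonneg.2 <| csInf_le_csSup (hne.image _) (hK.bddBelow_image (by fun_prop))
      (hK.bddAbove_image (by fun_prop))
  · exact csSup_le (hne.image _) (forall_mem_image.2 hb)
  · exact le_csInf (hne.image _) (forall_mem_image.2 ha)

theorem width_to_inner_ball (K : Set Plane) (hK : IsCompact K) (hconv : Convex ℝ K)
    (hint : (interior K).Nonempty) :
    ∃ c : Plane, Metric.closedBall c (width K / (2 * Real.sqrt 3)) ⊆ K := by
  obtain ⟨c, R, hR, hball, hmax⟩ := hK.exists_largest_closedBall_subset hint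
  have hne : K.Nonempty := ⟨c, hball (mem_closedBall_self hR.le)⟩
  obtain ⟨u, hu, hlow⟩ := exists_mem_neg_finrank_mul_le_inner_of_zero_mem_convexHull
    (zero_mem_convexHull_contactDirections hK hconv hR.le hball hmax) hR.le
  rw [finrank_euclideanSpace_fin] at hlow
  have hwidth : width K ≤ 3 * R := by
    refine (width_le_of_forall_mem hK hne (mem_sphere_zero_iff_norm.1 hu.1)
      (a := ⟪c, u⟫ - 2 * R) (b := ⟪c, u⟫ + R) (fun p hp => ?_) (fun p hp => ?_)).trans_eq
      (by ring)
    · have := hlow (p - c) fun s hs => hK.inner_sub_le_of_mem_contactDirections hp hs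
      push_cast at this
      linarith [inner_sub_left (𝕜 := ℝ) p c u]
    · linarith [hK.inner_sub_le_of_mem_contactDirections hp hu, inner_sub_left (𝕜 := ℝ) p c u]
  have hsqrt : 3 ≤ 2 * Real.sqrt 3 := by
    nlinarith [Real.sq_sqrt (show (0 : ℝ) ≤ 3 by norm_num), Real.sqrt_nonneg 3]
  refine ⟨c, (closedBall_subset_closedBall ?_).trans hball⟩
  rw [div_le_iff₀ (by linarith)]
  nlinarith
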